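/- arXiv:1202.6431 — 2 statements merged into one kernel-verified Lean document; each statement's English description precedes it below -/
import Mathlib

section
/- Let A have nonpositive off-diagonal entries and decompose A = λI - B with λ ≥ max_i A_{i...i} (so B is nonnegative). Then A is an M-tensor if and only if λ > ρ(B). -/
/-!
Any two splittings `A = λ I - B = c I - C` differ by a multiple of the identity tensor,
`B = C + (λ - c) I`, so they shift each other's eigenvalues by `λ - c`. If `A` is an M-tensor
through `C`, the eigenvalue `ρ(B)` of `B` (Yang–Yang) gives the eigenvalue `ρ(B) - (λ - c)` of `C`,
whence `ρ(B) - (λ - c) ≤ ρ(C) < c`, i.e. `ρ(B) < λ`. Conversely `λ I - B` itself witnesses that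
`A` is an M-tensor, `B` being nonnegative because `λ` dominates the diagonal of `A ∈ 𝕫`.
-/

open scoped BigOperators

/-- Action of an `(k+1)`-order `n`-dimensional real tensor on a complex vector:
`(A x^{m-1})_i = ∑_{i2,...,im} A_{i i2...im} x_{i2} ⋯ x_{im}` (here `k = m-1`). -/
noncomputable def tApplyC {n k : ℕ} (A : Fin n → (Fin k → Fin n) → ℝ) (x : Fin n → ℂ) (i : Fin n) : ℂ :=
  ∑ j : Fin k → Fin n, (A i j : ℂ) * ∏ t, x (j t)

/-- Real version of the tensor action. -/
def tApplyR {n k : ℕ} (A : Fin n → (Fin k → Fin n) → ℝ) (x : Fin n → ℝ) (i : Fin n) : ℝ :=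
  ∑ j : Fin k → Fin n, A i j * ∏ t, x (j t)

/-- `(lam, x)` is an eigenvalue-eigenvector pair: `x ≠ 0` and `A x^{m-1} = lam x^{[m-1]}`. -/
def IsEigPair {n k : ℕ} (A : Fin n → (Fin k → Fin n) → ℝ) (lam : ℂ) (x : Fin n → ℂ) : Prop :=
  x ≠ 0 ∧ ∀ i, tApplyC A x i = lam * x i ^ k

/-- `lam` is an eigenvalue of `A`. -/
def IsEig {n k : ℕ} (A : Fin n → (Fin k → Fin n) → ℝ) (lam : ℂ) : Prop :=
  ∃ x, IsEigPair A lam x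

/-- The set of moduli of eigenvalues of `A`. -/
def modSet {n k : ℕ} (A : Fin n → (Fin k → Fin n) → ℝ) : Set ℝ :=
  {r | ∃ lam, IsEig A lam ∧ r = ‖lam‖}

/-- The spectral radius: supremum of moduli of eigenvalues. -/
noncomputable def specRad {n k : ℕ} (A : Fin n → (Fin k → Fin n) → ℝ) : ℝ :=
  sSup (modSet A)

/-- The identity tensor: entries `δ_{i i2...im}`. -/
noncomputable def idT (n k : ℕ) : Fin n → (Fin k → Fin n) → ℝ :=
  fun i j => if (∀ t, j t = i) then 1 else 0

/-- Entrywise nonnegative tensor. -/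
def NonnegT {n k : ℕ} (A : Fin n → (Fin k → Fin n) → ℝ) : Prop := ∀ i j, 0 ≤ A i j

/-- `A` is an M-tensor: `A = c I - B` with `B ≥ 0` and `c > ρ(B)`. -/
def IsMTensor {n k : ℕ} (A : Fin n → (Fin k → Fin n) → ℝ) : Prop :=
  ∃ (B : Fin n → (Fin k → Fin n) → ℝ) (c : ℝ),
    NonnegT B ∧ specRad B < c ∧ ∀ i j, A i j = c * idT n k i j - B i j

/-- `ρ(A)` is an eigenvalue of `A` and bounds the modulus of every eigenvalue
(the Yang–Yang theorem for nonnegative tensors). -/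
def HasSpecRad {n k : ℕ} (A : Fin n → (Fin k → Fin n) → ℝ) : Prop :=
  IsEig A (specRad A) ∧ ∀ lam, IsEig A lam → ‖lam‖ ≤ specRad A

/-- Off-diagonal entries of `A` are all nonpositive (`A ∈ 𝕫`). -/
def ZTensor {n k : ℕ} (A : Fin n → (Fin k → Fin n) → ℝ) : Prop :=
  ∀ i j, (¬ ∀ t, j t = i) → A i j ≤ 0

/-- Irreducibility of a tensor. -/
def IrreducibleT {n k : ℕ} (A : Fin n → (Fin k → Fin n) → ℝ) : Prop :=
  ¬ ∃ S : Set (Fin n), S.Nonempty ∧ S ≠ Set.univ ∧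
      ∀ i ∈ S, ∀ j : Fin k → Fin n, (∀ t, j t ∉ S) → A i j = 0

/-- `C_i = ∑_{(i2,...,im) not all equal to i} |A_{i i2...im}|`. -/
noncomputable def offDiagSum {n k : ℕ} (A : Fin n → (Fin k → Fin n) → ℝ) (i : Fin n) : ℝ :=
  ∑ j ∈ Finset.univ.filter (fun j : Fin k → Fin n => ¬ ∀ t, j t = i), |A i j|

lemma tApplyC_idT {n k : ℕ} (x : Fin n → ℂ) (i : Fin n) :
    tApplyC (idT n k) x i = x i ^ k := by
  unfold tApplyC idT
  rw [Finset.sum_eq_single (fun _ => i)]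
  · simp [Finset.prod_const]
  · intro j _ hj
    have hji : ¬ ∀ t, j t = i := fun h => hj (funext h)
    simp [hji]
  · simp

lemma tApplyC_add_smul_idT {n k : ℕ} {A A' : Fin n → (Fin k → Fin n) → ℝ} {d : ℝ}
    (h : ∀ i j, A i j = A' i j + d * idT n k i j) (x : Fin n → ℂ) (i : Fin n) :
    tApplyC A x i = tApplyC A' x i + d * x i ^ k := by
  rw [← tApplyC_idT x i]
  simp only [tApplyC, Finset.mul_sum, ← Finset.sum_add_distrib, h]
  push_cast
  exact Finset.sum_congr rfl fun _ _ => by ring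

lemma IsEigPair.sub_of_eq_add_smul_idT {n k : ℕ} {A A' : Fin n → (Fin k → Fin n) → ℝ} {d : ℝ}
    (h : ∀ i j, A i j = A' i j + d * idT n k i j) {μ : ℂ} {x : Fin n → ℂ}
    (hx : IsEigPair A μ x) : IsEigPair A' (μ - d) x := by
  refine ⟨hx.1, fun i => ?_⟩
  have hi := hx.2 i
  rw [tApplyC_add_smul_idT h] at hi
  linear_combination hi

lemma specRad_sub_le_of_eq_add_smul_idT {n k : ℕ} {B C : Fin n → (Fin k → Fin n) → ℝ} {d : ℝ}
    (h : ∀ i j, B i j = C i j + d * idT n k i j) (hB : IsEig B (specRad B))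
    (hC : ∀ μ, IsEig C μ → ‖μ‖ ≤ specRad C) :
    specRad B - d ≤ specRad C := by
  obtain ⟨x, hx⟩ := hB
  have hCx := hC _ ⟨x, hx.sub_of_eq_add_smul_idT h⟩
  rw [← Complex.ofReal_sub, Complex.norm_real, Real.norm_eq_abs] at hCx
  exact (le_abs_self _).trans hCx

lemma nonnegT_smul_idT_sub {n k : ℕ} {A : Fin n → (Fin k → Fin n) → ℝ} {lam : ℝ}
    (hZ : ZTensor A) (hlam : ∀ i, A i (fun _ => i) ≤ lam) :
    NonnegT fun i j => lam * idT n k i j - A i j := by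
  intro i j
  by_cases hd : ∀ t, j t = i
  · obtain rfl : j = fun _ => i := funext hd
    simpa [idT] using hlam i
  · simpa [idT, hd] using hZ i j hd

/-- for `A ∈ 𝕫` decomposed as `A = λ I - B` with `λ ≥ max_i A_{i...i}`,
`A` is an M-tensor iff `λ > ρ(B)`. -/
theorem mTensor_iff_lam_gt_specRad {n k : ℕ} (A B : Fin n → (Fin k → Fin n) → ℝ) (lam : ℝ)
    (hZ : ZTensor A) (hlam : ∀ i, A i (fun _ => i) ≤ lam)
    (hB : ∀ i j, B i j = lam * idT n k i j - A i j)
    (hYY : ∀ C : Fin n → (Fin k → Fin n) → ℝ, NonnegT C → HasSpecRad C) :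
    IsMTensor A ↔ specRad B < lam := by
  have hBnn : NonnegT B := by
    simpa only [← hB] using nonnegT_smul_idT_sub hZ hlam
  constructor
  · rintro ⟨C, c, hCnn, hρC, hAC⟩
    have hBC : ∀ i j, B i j = C i j + (lam - c) * idT n k i j := fun i j => by
      rw [hB, hAC]; ring
    have := specRad_sub_le_of_eq_add_smul_idT hBC (hYY B hBnn).1 (hYY C hCnn).2
    linarith
  · intro hρB
    exact ⟨B, lam, hBnn, hρB, fun i j => by linarith [hB i j]⟩
end

section
/- Let A be a tensor with nonpositive off-diagonal entries and suppose A is diagonally dominant (Σ over non-diagonal index tuples |A_{i i2...im}| ≤ A_{i...i} for all i) with nonnegative diagonal. Then every eigenvalue λ of A satisfies Re λ ≥ 0. -/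
open scoped BigOperators

/- Geršgorin's argument: at a coordinate where `|x_i|` is maximal, the eigen-equation
isolates `(λ - A_{i…i}) x_i^{m-1}` as the off-diagonal part of `(A x^{m-1})_i`, whose modulus
is at most `C_i |x_i|^{m-1}`. Hence `|λ - A_{i…i}| ≤ C_i ≤ A_{i…i}`, which forces `Re λ ≥ 0`. -/

section Gershgorin

variable {n k : ℕ} (A : Fin n → (Fin k → Fin n) → ℝ)

theorem tApplyC_eq_diag_add_offDiag (x : Fin n → ℂ) (i : Fin n) :
    tApplyC A x i = A i (fun _ => i) * x i ^ k +
      ∑ j ∈ Finset.univ.filter (fun j : Fin k → Fin n => ¬ ∀ t, j t = i),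
        (A i j : ℂ) * ∏ t, x (j t) := by
  have hdiag : Finset.univ.filter (fun j : Fin k → Fin n => ∀ t, j t = i) = {fun _ => i} := by
    ext j
    simp [funext_iff]
  rw [tApplyC, ← Finset.sum_filter_add_sum_filter_not Finset.univ (fun j => ∀ t, j t = i), hdiag,
    Finset.sum_singleton, Finset.prod_const, Finset.card_univ, Fintype.card_fin]

theorem norm_offDiag_le {x : Fin n → ℂ} {M : ℝ} (hM : ∀ l, ‖x l‖ ≤ M) (i : Fin n) :
    ‖∑ j ∈ Finset.univ.filter (fun j : Fin k → Fin n => ¬ ∀ t, j t = i),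
        (A i j : ℂ) * ∏ t, x (j t)‖ ≤ offDiagSum A i * M ^ k := by
  rw [offDiagSum, Finset.sum_mul]
  refine (norm_sum_le _ _).trans (Finset.sum_le_sum fun j _ => ?_)
  rw [norm_mul, norm_prod, Complex.norm_real, Real.norm_eq_abs]
  gcongr
  calc ∏ t, ‖x (j t)‖ ≤ ∏ _t : Fin k, M :=
        Finset.prod_le_prod (fun t _ => norm_nonneg _) fun t _ => hM (j t)
    _ = M ^ k := by simp

theorem IsEig.exists_norm_sub_diag_le_offDiagSum {lam : ℂ} (h : IsEig A lam) :
    ∃ i, ‖lam - A i (fun _ => i)‖ ≤ offDiagSum A i := by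
  obtain ⟨x, hx0, heig⟩ := h
  obtain ⟨l, hl⟩ := Function.ne_iff.mp hx0
  obtain ⟨i, -, hmax⟩ := Finset.exists_max_image Finset.univ (fun l => ‖x l‖) ⟨l, Finset.mem_univ l⟩
  have hxi : 0 < ‖x i‖ := (norm_pos_iff.mpr hl).trans_le (hmax l (Finset.mem_univ l))
  refine ⟨i, le_of_mul_le_mul_right ?_ (pow_pos hxi k)⟩
  calc ‖lam - A i (fun _ => i)‖ * ‖x i‖ ^ k
      = ‖∑ j ∈ Finset.univ.filter (fun j : Fin k → Fin n => ¬ ∀ t, j t = i),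
          (A i j : ℂ) * ∏ t, x (j t)‖ := by
        rw [← norm_pow, ← norm_mul, sub_mul, ← heig i, tApplyC_eq_diag_add_offDiag, add_sub_cancel_left]
    _ ≤ offDiagSum A i * ‖x i‖ ^ k := norm_offDiag_le A (fun l => hmax l (Finset.mem_univ l)) i

end Gershgorin

theorem diagDom_re_nonneg_general {n k : ℕ} (A : Fin n → (Fin k → Fin n) → ℝ)
    (hdd : ∀ i, offDiagSum A i ≤ A i (fun _ => i)) :
    ∀ lam : ℂ, IsEig A lam → 0 ≤ lam.re := by
  intro lam hlam
  obtain ⟨i, hi⟩ := hlam.exists_norm_sub_diag_le_offDiagSum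
  have hre : A i (fun _ => i) - lam.re ≤ ‖lam - A i (fun _ => i)‖ := by
    simpa [add_comm] using neg_le_of_abs_le (Complex.abs_re_le_norm (lam - A i (fun _ => i)))
  linarith [hdd i]

/-- a diagonally dominant tensor in `𝕫` with nonnegative diagonal has all
eigenvalues with nonnegative real part. -/
theorem diagDom_re_nonneg {n k : ℕ} (A : Fin n → (Fin k → Fin n) → ℝ)
    (hZ : ZTensor A) (hdiag : ∀ i, 0 ≤ A i (fun _ => i))
    (hdd : ∀ i, offDiagSum A i ≤ A i (fun _ => i)) :
    ∀ lam : ℂ, IsEig A lam → 0 ≤ lam.re :=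
  diagDom_re_nonneg_general A hdd
end
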